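/- For all complete binary trees T1 with m leaves and T2 with n leaves, and all α ∈ S_m, β ∈ S_n: T1(α)⋆T2(β) − T2(β)⋆T1(α) = Σ_γ (T1∧T2)(γ), where the sum is over all γ ∈ S_{m+n} with std(γ(1)⋯γ(m)) = α and std(γ(m+1)⋯γ(m+n)) = β, and T1∧T2 is the complete binary tree with left subtree T1 and right subtree T2, evaluated with leaf labels γ. -/

import Mathlib

/-- The free module on words of positive integers, with coefficients in `R`.
`ℚ[S_n]` is identified with the span of the permutation words of {1,…,n}. -/
abbrev FW (R : Type) [CommRing R] := (List ℕ) →₀ R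

variable {R : Type} [CommRing R]

/-- Concatenation product, extended bilinearly. -/
noncomputable def catW (x y : FW R) : FW R :=
  x.sum fun u a => y.sum fun v b => Finsupp.single (u ++ v) (a * b)

/-- The bracket [x,y] = x·y − y·x of the concatenation product. -/
noncomputable def brakW (x y : FW R) : FW R := catW x y - catW y x

/-- (Incomplete) binary trees; `nil` is the empty tree. The complete binary tree with
`t.nodes + 1` leaves whose internal nodes form `t` is implicit in the definitions below. -/
inductive BT
  | nil : BT
  | nd : BT → BT → BT
deriving DecidableEq

/-- Number of nodes of a binary tree. -/
def BT.nodes : BT → ℕ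
  | .nil => 0
  | .nd l r => l.nodes + r.nodes + 1

/-- The evaluation T(σ) of the complete binary tree `T` whose internal nodes form `t`, with
leaves labelled left to right by the word `w`: each leaf gets the one-letter word of its label
and each internal node the bracket of concatenation. -/
noncomputable def evalBT : BT → List ℕ → FW R
  | .nil, w => Finsupp.single w 1
  | .nd l r, w => brakW (evalBT l (w.take (l.nodes + 1))) (evalBT r (w.drop (l.nodes + 1)))

/-- The standardization of a word with distinct letters: each letter is replaced by its rank. -/
def stdW (w : List ℕ) : List ℕ := w.map fun x => (w.filter (· ≤ x)).length

/-- The set of permutation words of {1, …, n}. -/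
def permWords (n : ℕ) : Finset (List ℕ) := (List.range' 1 n).permutations.toFinset

/-- Convolution α⋆β of two permutation words: the sum of all permutation words γ of size
|α|+|β| with std(γ(1)⋯γ(m)) = α and std(γ(m+1)⋯γ(m+n)) = β. -/
noncomputable def convW (u v : List ℕ) : FW R :=
  ∑ γ ∈ (permWords (u.length + v.length)).filter
      (fun γ => stdW (γ.take u.length) = u ∧ stdW (γ.drop u.length) = v),
    Finsupp.single γ 1

/-- The convolution product, extended bilinearly. -/
noncomputable def starW (x y : FW R) : FW R :=
  x.sum fun u a => y.sum fun v b => (a * b) • convW u v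

/-- Whether the word `w` is an admissible labelling of (the completion of) `t`: at each internal
node, the smallest label lies in the left subtree and the largest in the right subtree. -/
def admB : BT → List ℕ → Bool
  | .nil, _ => true
  | .nd l r, w =>
    admB l (w.take (l.nodes + 1)) && admB r (w.drop (l.nodes + 1))
      && decide ((w.take (l.nodes + 1)).minimum = w.minimum)
      && decide ((w.drop (l.nodes + 1)).maximum = w.maximum)

/-- c_t: the sum of the evaluations T(σ) over all admissible labellings σ of the complete
binary tree whose internal nodes form `t`. -/
noncomputable def cElt (t : BT) : FW R :=
  ∑ w ∈ (permWords (t.nodes + 1)).filter (fun w => admB t w = true), evalBT t w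

/-!
If `std w = α` then `w` is `α` relabelled increasingly by the letters of `w`, and tree evaluation
commutes with relabelling letters, so for `γ = γ₁γ₂` in the fiber of `(α, β)` the word
`(T₁ ∧ T₂)(γ)` is obtained from `T₁(α) = ∑ xᵤ u` and `T₂(β) = ∑ y_v v` as
`∑ xᵤ y_v (γ₁[u] γ₂[v] - γ₂[v] γ₁[u])`, where `γ₁[u]` is `u` relabelled by the letters of `γ₁`.
For fixed `u, v`, the map `γ ↦ γ₁[u] γ₂[v]` is a bijection from the fiber of `(α, β)` onto that
of `(u, v)`, so summing the first terms over `γ` gives `u ⋆ v`; followed by the rotation by `m`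
it becomes a bijection onto the fiber of `(v, u)`, so the second terms give `v ⋆ u`.
-/

def sortW (w : List ℕ) : List ℕ := w.mergeSort (fun a b => a ≤ b)

/-- The `i`-th smallest letter of `w`, counting from `1`. -/
def letterAt (w : List ℕ) (i : ℕ) : ℕ := (sortW w).getD (i - 1) 0

def relW (w u : List ℕ) : List ℕ := u.map (letterAt w)

lemma length_relW (w u : List ℕ) : (relW w u).length = u.length := List.length_map _

lemma sortW_perm (w : List ℕ) : (sortW w).Perm w := List.mergeSort_perm w _

lemma sortW_pairwise_le (w : List ℕ) : (sortW w).Pairwise (· ≤ ·) :=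
  List.pairwise_mergeSort' (· ≤ ·) w

lemma sortW_eq_of_perm {w w' : List ℕ} (h : w.Perm w') : sortW w = sortW w' :=
  List.Perm.eq_of_pairwise' (sortW_pairwise_le w) (sortW_pairwise_le w')
    (((sortW_perm w).trans h).trans (sortW_perm w').symm)

lemma sortW_pairwise_lt {w : List ℕ} (hw : w.Nodup) : (sortW w).Pairwise (· < ·) :=
  ((sortW_pairwise_le w).and ((sortW_perm w).nodup_iff.mpr hw)).imp
    fun h => lt_of_le_of_ne h.1 h.2

lemma length_filter_range'_le {k x : ℕ} (hx : x ≤ k) :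
    ((List.range' 1 k).filter (· ≤ x)).length = x := by
  obtain ⟨d, rfl⟩ := Nat.exists_eq_add_of_le hx
  rw [← List.range'_append, List.filter_append, List.filter_eq_self.mpr, List.filter_eq_nil_iff.mpr]
  · simp
  · intro y hy; simp [List.mem_range'] at hy ⊢; omega
  · intro y hy; simp [List.mem_range'] at hy ⊢; omega

lemma getD_length_filter_le_sub_one {s : List ℕ} (hs : s.Pairwise (· < ·)) {x : ℕ} (hx : x ∈ s) :
    s.getD ((s.filter (· ≤ x)).length - 1) 0 = x := by
  induction s with
  | nil => simp at hx
  | cons a t ih =>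
    obtain ⟨ha, ht⟩ := List.pairwise_cons.mp hs
    rcases List.mem_cons.mp hx with rfl | hx'
    · have : t.filter (· ≤ x) = [] :=
        List.filter_eq_nil_iff.mpr fun y hy => by simpa using (ha y hy).not_ge
      simp [this]
    · have hpos : 0 < (t.filter (· ≤ x)).length :=
        List.length_pos_of_mem (List.mem_filter.mpr ⟨hx', by simp⟩)
      obtain ⟨k, hk⟩ := Nat.exists_eq_add_of_lt hpos
      have : ((a :: t).filter (· ≤ x)).length = k + 1 + 1 := by
        simp [(ha x hx').le, hk]
      simpa [this, hk] using ih ht hx'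

lemma mem_permWords {k : ℕ} {w : List ℕ} : w ∈ permWords k ↔ w.Perm (List.range' 1 k) := by
  simp [permWords, List.mem_permutations]

lemma length_of_mem_permWords {k : ℕ} {w : List ℕ} (h : w ∈ permWords k) : w.length = k := by
  simpa using (mem_permWords.mp h).length_eq

lemma nodup_of_mem_permWords {k : ℕ} {w : List ℕ} (h : w ∈ permWords k) : w.Nodup :=
  (mem_permWords.mp h).nodup_iff.mpr List.nodup_range'

lemma bounds_of_mem_permWords {k : ℕ} {u : List ℕ} (hu : u ∈ permWords k) {i : ℕ} (hi : i ∈ u) :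
    1 ≤ i ∧ i ≤ k := by
  have := List.mem_range'_1.mp ((mem_permWords.mp hu).mem_iff.mp hi)
  omega

lemma length_filter_le_of_mem_permWords {k : ℕ} {u : List ℕ} (hu : u ∈ permWords k) {x : ℕ}
    (hx : x ≤ k) : (u.filter (· ≤ x)).length = x := by
  rw [((mem_permWords.mp hu).filter _).length_eq, length_filter_range'_le hx]

lemma letterAt_length_filter_le {w : List ℕ} (hw : w.Nodup) {x : ℕ} (hx : x ∈ w) :
    letterAt w (w.filter (· ≤ x)).length = x := by
  rw [letterAt, ← ((sortW_perm w).filter _).length_eq]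
  exact getD_length_filter_le_sub_one (sortW_pairwise_lt hw) ((sortW_perm w).mem_iff.mpr hx)

lemma relW_stdW {w : List ℕ} (hw : w.Nodup) : relW w (stdW w) = w := by
  rw [relW, stdW, List.map_map]
  conv_rhs => rw [← List.map_id w]
  exact List.map_congr_left fun x hx => letterAt_length_filter_le hw hx

lemma letterAt_strictMonoOn {w : List ℕ} (hw : w.Nodup) :
    StrictMonoOn (letterAt w) (Set.Icc 1 w.length) := by
  intro i hi j hj hij
  have hlen : (sortW w).length = w.length := (sortW_perm w).length_eq
  simp only [Set.mem_Icc] at hi hj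
  rw [letterAt, letterAt, List.getD_eq_getElem _ _ (by omega), List.getD_eq_getElem _ _ (by omega)]
  exact List.pairwise_iff_getElem.mp (sortW_pairwise_lt hw) _ _ _ _ (by omega)

lemma stdW_relW {w u : List ℕ} (hw : w.Nodup) (hu : u ∈ permWords w.length) :
    stdW (relW w u) = u := by
  rw [stdW, relW, List.map_map]
  conv_rhs => rw [← List.map_id u]
  refine List.map_congr_left fun i hi => ?_
  have hmem : ∀ {j}, j ∈ u → j ∈ Set.Icc 1 w.length := fun hj => bounds_of_mem_permWords hu hj
  have hfilter : (u.map (letterAt w)).filter (· ≤ letterAt w i)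
      = (u.filter (· ≤ i)).map (letterAt w) := by
    rw [List.filter_map]
    congr 1
    exact List.filter_congr fun j hj => by
      simp [(letterAt_strictMonoOn hw).le_iff_le (hmem hj) (hmem hi)]
  simp only [Function.comp_apply, hfilter, List.length_map]
  exact length_filter_le_of_mem_permWords hu (hmem hi).2

lemma relW_perm {w u : List ℕ} (hu : u ∈ permWords w.length) : (relW w u).Perm w := by
  have hsort : (List.range' 1 w.length).map (letterAt w) = sortW w := by
    have hlen : (sortW w).length = w.length := (sortW_perm w).length_eq
    refine List.ext_getElem (by simp [hlen]) fun i h1 h2 => ?_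
    simp only [List.length_map, List.length_range'] at h1
    simp [letterAt, List.getElem?_eq_getElem h2]
  exact (((mem_permWords.mp hu).map _).trans (List.Perm.of_eq hsort)).trans (sortW_perm w)

lemma letterAt_eq_of_perm {w w' : List ℕ} (h : w.Perm w') : letterAt w = letterAt w' := by
  funext i
  rw [letterAt, letterAt, sortW_eq_of_perm h]

lemma relW_relW_of_stdW_eq {w u α : List ℕ} (hw : w.Nodup) (hu : u ∈ permWords w.length)
    (hα : stdW w = α) : relW (relW w u) α = w := by
  rw [relW, letterAt_eq_of_perm (relW_perm hu), ← hα]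
  exact relW_stdW hw

def stdFiber (m n : ℕ) (α β : List ℕ) : Finset (List ℕ) :=
  (permWords (m + n)).filter fun γ => stdW (γ.take m) = α ∧ stdW (γ.drop m) = β

def relabelPair (m : ℕ) (u v γ : List ℕ) : List ℕ :=
  relW (γ.take m) u ++ relW (γ.drop m) v

section stdFiber

variable {m n : ℕ} {α β u v γ : List ℕ}

lemma convW_eq_sum_stdFiber (u v : List ℕ) :
    (convW u v : FW R) = ∑ γ ∈ stdFiber u.length v.length u v, Finsupp.single γ 1 := rfl

lemma take_drop_of_mem_permWords (hγ : γ ∈ permWords (m + n)) :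
    (γ.take m).Nodup ∧ (γ.drop m).Nodup ∧ (γ.take m).length = m ∧ (γ.drop m).length = n := by
  have hnd := nodup_of_mem_permWords hγ
  have hlen := length_of_mem_permWords hγ
  exact ⟨hnd.sublist (List.take_sublist _ _), hnd.sublist (List.drop_sublist _ _),
    by simp [hlen], by simp [hlen]⟩

lemma relabelPair_mem_stdFiber (hγ : γ ∈ stdFiber m n α β) (hu : u ∈ permWords m)
    (hv : v ∈ permWords n) : relabelPair m u v γ ∈ stdFiber m n u v := by
  obtain ⟨hperm, -, -⟩ := Finset.mem_filter.mp hγ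
  obtain ⟨nd₁, nd₂, len₁, len₂⟩ := take_drop_of_mem_permWords hperm
  rw [← len₁] at hu
  rw [← len₂] at hv
  have hlen : (relW (γ.take m) u).length = m := by
    rw [length_relW, length_of_mem_permWords hu, len₁]
  refine Finset.mem_filter.mpr ⟨mem_permWords.mpr ?_, ?_, ?_⟩
  · rw [relabelPair]
    refine ((relW_perm hu).append (relW_perm hv)).trans ?_
    rw [List.take_append_drop]
    exact mem_permWords.mp hperm
  · rw [relabelPair, List.take_left' hlen, stdW_relW nd₁ hu]
  · rw [relabelPair, List.drop_left' hlen, stdW_relW nd₂ hv]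

lemma relabelPair_relabelPair (hγ : γ ∈ stdFiber m n α β) (hu : u ∈ permWords m)
    (hv : v ∈ permWords n) : relabelPair m α β (relabelPair m u v γ) = γ := by
  obtain ⟨hperm, hα, hβ⟩ := Finset.mem_filter.mp hγ
  obtain ⟨nd₁, nd₂, len₁, len₂⟩ := take_drop_of_mem_permWords hperm
  rw [← len₁] at hu
  rw [← len₂] at hv
  have hlen : (relW (γ.take m) u).length = m := by
    rw [length_relW, length_of_mem_permWords hu, len₁]
  rw [relabelPair, relabelPair, List.take_left' hlen, List.drop_left' hlen,
    relW_relW_of_stdW_eq nd₁ hu hα, relW_relW_of_stdW_eq nd₂ hv hβ, List.take_append_drop]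

lemma sum_stdFiber_relabelPair {M : Type*} [AddCommMonoid M] (f : List ℕ → M)
    (hα : α ∈ permWords m) (hβ : β ∈ permWords n) (hu : u ∈ permWords m)
    (hv : v ∈ permWords n) :
    ∑ γ ∈ stdFiber m n α β, f (relabelPair m u v γ) = ∑ δ ∈ stdFiber m n u v, f δ :=
  Finset.sum_nbij' (relabelPair m u v) (relabelPair m α β)
    (fun _ hγ => relabelPair_mem_stdFiber hγ hu hv)
    (fun _ hδ => relabelPair_mem_stdFiber hδ hα hβ)
    (fun _ hγ => relabelPair_relabelPair hγ hu hv)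
    (fun _ hδ => relabelPair_relabelPair hδ hα hβ) (fun _ _ => rfl)

lemma rotate_mem_stdFiber (hγ : γ ∈ stdFiber m n α β) : γ.rotate m ∈ stdFiber n m β α := by
  obtain ⟨hperm, hα, hβ⟩ := Finset.mem_filter.mp hγ
  obtain ⟨-, -, -, len₂⟩ := take_drop_of_mem_permWords hperm
  have hrot : γ.rotate m = γ.drop m ++ γ.take m :=
    List.rotate_eq_drop_append_take (by rw [length_of_mem_permWords hperm]; omega)
  refine Finset.mem_filter.mpr ⟨mem_permWords.mpr ?_, ?_, ?_⟩
  · rw [Nat.add_comm]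
    exact (List.rotate_perm γ m).trans (mem_permWords.mp hperm)
  · rwa [hrot, List.take_left' len₂]
  · rwa [hrot, List.drop_left' len₂]

lemma rotate_rotate_of_mem_stdFiber (hγ : γ ∈ stdFiber m n α β) : (γ.rotate m).rotate n = γ := by
  rw [List.rotate_rotate, ← length_of_mem_permWords (Finset.mem_filter.mp hγ).1,
    List.rotate_length]

lemma sum_stdFiber_rotate {M : Type*} [AddCommMonoid M] (f : List ℕ → M) :
    ∑ γ ∈ stdFiber m n α β, f (γ.rotate m) = ∑ δ ∈ stdFiber n m β α, f δ :=
  Finset.sum_nbij' (·.rotate m) (·.rotate n)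
    (fun _ hγ => rotate_mem_stdFiber hγ) (fun _ hδ => rotate_mem_stdFiber hδ)
    (fun _ hγ => rotate_rotate_of_mem_stdFiber hγ)
    (fun _ hδ => rotate_rotate_of_mem_stdFiber hδ) (fun _ _ => rfl)

lemma convW_eq_sum_relabelPair (hα : α ∈ permWords m) (hβ : β ∈ permWords n)
    (hu : u ∈ permWords m) (hv : v ∈ permWords n) :
    (convW u v : FW R) = ∑ γ ∈ stdFiber m n α β, Finsupp.single (relabelPair m u v γ) 1 := by
  rw [sum_stdFiber_relabelPair (Finsupp.single · 1) hα hβ hu hv, convW_eq_sum_stdFiber,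
    length_of_mem_permWords hu, length_of_mem_permWords hv]

lemma convW_swap_eq_sum_relabelPair (hα : α ∈ permWords m) (hβ : β ∈ permWords n)
    (hu : u ∈ permWords m) (hv : v ∈ permWords n) :
    (convW v u : FW R) = ∑ γ ∈ stdFiber m n α β,
      Finsupp.single (relW (γ.drop m) v ++ relW (γ.take m) u) 1 := by
  have hrot : ∀ γ, relW (γ.drop m) v ++ relW (γ.take m) u = (relabelPair m u v γ).rotate m := by
    intro γ
    have h := List.rotate_append_length_eq (relW (γ.take m) u) (relW (γ.drop m) v)
    rw [length_relW, length_of_mem_permWords hu] at h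
    exact h.symm
  simp only [hrot]
  rw [sum_stdFiber_relabelPair (fun δ => Finsupp.single (δ.rotate m) 1) hα hβ hu hv,
    sum_stdFiber_rotate (Finsupp.single · 1), convW_eq_sum_stdFiber,
    length_of_mem_permWords hu, length_of_mem_permWords hv]

end stdFiber

lemma catW_mapDomain_mapDomain (f g : List ℕ → List ℕ) (x y : FW R) :
    catW (x.mapDomain f) (y.mapDomain g)
      = x.sum fun u a => y.sum fun v b => Finsupp.single (f u ++ g v) (a * b) := by
  rw [catW, Finsupp.sum_mapDomain_index (by simp) fun _ _ _ => by
    simp [add_mul, Finsupp.sum_add]]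
  refine Finsupp.sum_congr fun u _ => ?_
  rw [Finsupp.sum_mapDomain_index (by simp) fun _ _ _ => by simp [mul_add]]

lemma evalBT_map (f : ℕ → ℕ) : ∀ (t : BT) (w : List ℕ),
    (evalBT t (w.map f) : FW R) = (evalBT t w).mapDomain (List.map f)
  | .nil, w => by simp [evalBT, Finsupp.mapDomain_single]
  | .nd l r, w => by
    rw [evalBT, evalBT, brakW, brakW, ← List.map_take, ← List.map_drop, evalBT_map f l,
      evalBT_map f r, catW_mapDomain_mapDomain, catW_mapDomain_mapDomain, Finsupp.mapDomain_sub,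
      catW, catW]
    simp only [Finsupp.mapDomain_sum, Finsupp.mapDomain_single, List.map_append]

lemma evalBT_eq_mapDomain_of_stdW_eq (t : BT) {w α : List ℕ} (hw : w.Nodup) (h : stdW w = α) :
    (evalBT t w : FW R) = (evalBT t α).mapDomain (relW w) := by
  conv_lhs => rw [← relW_stdW hw, h]
  exact evalBT_map _ t α

lemma mem_support_catW {x y : FW R} {w : List ℕ} (hw : w ∈ (catW x y).support) :
    ∃ u ∈ x.support, ∃ v ∈ y.support, w = u ++ v := by
  obtain ⟨u, hu, hw⟩ := Finset.mem_biUnion.mp (Finsupp.support_sum hw)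
  obtain ⟨v, hv, hw⟩ := Finset.mem_biUnion.mp (Finsupp.support_sum hw)
  exact ⟨u, hu, v, hv, by simpa using Finsupp.support_single_subset hw⟩

lemma perm_of_mem_support_evalBT : ∀ {t : BT} {w u : List ℕ},
    u ∈ (evalBT t w : FW R).support → u.Perm w
  | .nil, w, u, hu => by
    obtain rfl : u = w := by simpa using Finsupp.support_single_subset hu
    rfl
  | .nd l r, w, u, hu => by
    rw [evalBT, brakW] at hu
    conv_rhs => rw [← List.take_append_drop (l.nodes + 1) w]
    rcases Finset.mem_union.mp (Finsupp.support_sub hu) with h | h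
    · obtain ⟨u₁, h₁, u₂, h₂, rfl⟩ := mem_support_catW h
      exact (perm_of_mem_support_evalBT h₁).append (perm_of_mem_support_evalBT h₂)
    · obtain ⟨u₂, h₂, u₁, h₁, rfl⟩ := mem_support_catW h
      exact ((perm_of_mem_support_evalBT h₂).append (perm_of_mem_support_evalBT h₁)).trans
        List.perm_append_comm

lemma mem_permWords_of_mem_support_evalBT {t : BT} {k : ℕ} {w u : List ℕ}
    (hw : w ∈ permWords k) (hu : u ∈ (evalBT t w : FW R).support) : u ∈ permWords k :=
  mem_permWords.mpr ((perm_of_mem_support_evalBT hu).trans (mem_permWords.mp hw))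

lemma finset_sum_finsupp_sum₂_single {ι : Type*} (s : Finset ι) (x y : FW R)
    (p : ι → List ℕ → List ℕ → List ℕ) :
    ∑ i ∈ s, (x.sum fun u a => y.sum fun v b => Finsupp.single (p i u v) (a * b))
      = x.sum fun u a => y.sum fun v b => (a * b) • ∑ i ∈ s, Finsupp.single (p i u v) 1 := by
  simp only [Finsupp.sum, Finset.smul_sum, Finsupp.smul_single_one]
  rw [Finset.sum_comm]
  exact Finset.sum_congr rfl fun _ _ => Finset.sum_comm

section convolution

variable {m n : ℕ} {α β : List ℕ}

lemma sum_stdFiber_catW_mapDomain (hα : α ∈ permWords m) (hβ : β ∈ permWords n) {x y : FW R}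
    (hx : ∀ u ∈ x.support, u ∈ permWords m) (hy : ∀ v ∈ y.support, v ∈ permWords n) :
    ∑ γ ∈ stdFiber m n α β, catW (x.mapDomain (relW (γ.take m))) (y.mapDomain (relW (γ.drop m)))
      = starW x y := by
  simp only [catW_mapDomain_mapDomain]
  rw [finset_sum_finsupp_sum₂_single, starW]
  refine Finsupp.sum_congr fun u hu => Finsupp.sum_congr fun v hv => ?_
  rw [convW_eq_sum_relabelPair hα hβ (hx u hu) (hy v hv)]
  rfl

lemma sum_stdFiber_catW_mapDomain_swap (hα : α ∈ permWords m) (hβ : β ∈ permWords n)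
    {x y : FW R} (hx : ∀ u ∈ x.support, u ∈ permWords m)
    (hy : ∀ v ∈ y.support, v ∈ permWords n) :
    ∑ γ ∈ stdFiber m n α β, catW (y.mapDomain (relW (γ.drop m))) (x.mapDomain (relW (γ.take m)))
      = starW y x := by
  simp only [catW_mapDomain_mapDomain]
  rw [finset_sum_finsupp_sum₂_single, starW]
  refine Finsupp.sum_congr fun v hv => Finsupp.sum_congr fun u hu => ?_
  rw [convW_swap_eq_sum_relabelPair hα hβ (hx u hu) (hy v hv)]

end convolution

theorem stmt7 : ∀ t1 t2 : BT, ∀ m n : ℕ, t1.nodes + 1 = m → t2.nodes + 1 = n →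
    ∀ α ∈ permWords m, ∀ β ∈ permWords n,
    starW (evalBT t1 α) (evalBT t2 β) - starW (evalBT t2 β) (evalBT t1 α)
      = ∑ γ ∈ (permWords (m + n)).filter
            (fun γ => stdW (γ.take m) = α ∧ stdW (γ.drop m) = β),
          (evalBT (BT.nd t1 t2) γ : FW ℚ) := by
  rintro t1 t2 m n hm - α hα β hβ
  have hX : ∀ u ∈ (evalBT t1 α : FW ℚ).support, u ∈ permWords m :=
    fun _ => mem_permWords_of_mem_support_evalBT hα
  have hY : ∀ v ∈ (evalBT t2 β : FW ℚ).support, v ∈ permWords n :=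
    fun _ => mem_permWords_of_mem_support_evalBT hβ
  have hfiber : ∀ γ ∈ stdFiber m n α β, (evalBT (BT.nd t1 t2) γ : FW ℚ)
      = catW ((evalBT t1 α).mapDomain (relW (γ.take m)))
          ((evalBT t2 β).mapDomain (relW (γ.drop m)))
        - catW ((evalBT t2 β).mapDomain (relW (γ.drop m)))
          ((evalBT t1 α).mapDomain (relW (γ.take m))) := by
    intro γ hmem
    obtain ⟨hperm, hstd₁, hstd₂⟩ := Finset.mem_filter.mp hmem
    obtain ⟨nd₁, nd₂, -, -⟩ := take_drop_of_mem_permWords hperm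
    rw [evalBT, brakW, hm, evalBT_eq_mapDomain_of_stdW_eq t1 nd₁ hstd₁,
      evalBT_eq_mapDomain_of_stdW_eq t2 nd₂ hstd₂]
  rw [← stdFiber, Finset.sum_congr rfl hfiber, Finset.sum_sub_distrib,
    sum_stdFiber_catW_mapDomain hα hβ hX hY, sum_stdFiber_catW_mapDomain_swap hα hβ hX hY]
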